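/- Let E be the infinite-dimensional Grassmann algebra over a field F of characteristic zero. The tensor product E ⊗_F E has the primeness property on central polynomials: if f·g is a proper central polynomial for E ⊗ E, with f and g in disjoint sets of variables, then both f and g are proper central polynomials for E ⊗ E. -/

import Mathlib

open scoped TensorProduct

/-- Evaluation of a noncommutative polynomial in `n` variables at elements of `A`. -/
noncomputable def polyEval {F : Type*} [CommSemiring F] {A : Type*} [Semiring A] [Algebra F A]
    {n : ℕ} (f : FreeAlgebra F (Fin n)) (v : Fin n → A) : A :=
  FreeAlgebra.lift F v f

/-- `f` is a polynomial identity for `A`. -/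
def IsIdPoly (F : Type*) [CommSemiring F] (A : Type*) [Semiring A] [Algebra F A]
    {n : ℕ} (f : FreeAlgebra F (Fin n)) : Prop :=
  ∀ v : Fin n → A, polyEval f v = 0

/-- `f` is a central polynomial for `A`. -/
def IsCentralPoly (F : Type*) [CommSemiring F] (A : Type*) [Semiring A] [Algebra F A]
    {n : ℕ} (f : FreeAlgebra F (Fin n)) : Prop :=
  ∀ v : Fin n → A, polyEval f v ∈ Set.center A

/-- `f` is a proper central polynomial for `A`. -/
def IsProperCentralPoly (F : Type*) [CommSemiring F] (A : Type*) [Semiring A] [Algebra F A]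
    {n : ℕ} (f : FreeAlgebra F (Fin n)) : Prop :=
  IsCentralPoly F A f ∧ ¬ IsIdPoly F A f

/-- The product `f·g` of two polynomials in disjoint sets of variables. -/
noncomputable def disjProd {F : Type*} [CommSemiring F] {r s : ℕ}
    (f : FreeAlgebra F (Fin r)) (g : FreeAlgebra F (Fin s)) : FreeAlgebra F (Fin (r + s)) :=
  FreeAlgebra.lift F (fun i => FreeAlgebra.ι F (Fin.castAdd s i)) f *
    FreeAlgebra.lift F (fun i => FreeAlgebra.ι F (Fin.natAdd r i)) g

/-- `A` has the primeness property on central polynomials. -/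
def HasPrimeness (F : Type*) [CommSemiring F] (A : Type*) [Semiring A] [Algebra F A] : Prop :=
  (∃ (n : ℕ) (f : FreeAlgebra F (Fin n)), IsProperCentralPoly F A f) ∧
    ∀ (r s : ℕ) (f : FreeAlgebra F (Fin r)) (g : FreeAlgebra F (Fin s)),
      IsProperCentralPoly F A (disjProd f g) →
        IsProperCentralPoly F A f ∧ IsProperCentralPoly F A g

/-- The multilinear polynomial `∑ σ, λ σ • x_{σ(1)} ⋯ x_{σ(n)}`. -/
noncomputable def mlin {F : Type*} [CommSemiring F] {n : ℕ} (lam : Equiv.Perm (Fin n) → F) :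
    FreeAlgebra F (Fin n) :=
  ∑ σ : Equiv.Perm (Fin n), lam σ • (List.ofFn fun i => FreeAlgebra.ι F (σ i)).prod

/-- Direct evaluation of the multilinear polynomial with coefficients `lam`. -/
noncomputable def mlinEval {F : Type*} [CommSemiring F] {A : Type*} [Semiring A] [Algebra F A]
    {n : ℕ} (lam : Equiv.Perm (Fin n) → F) (v : Fin n → A) : A :=
  ∑ σ : Equiv.Perm (Fin n), lam σ • (List.ofFn fun i => v (σ i)).prod

/-!
Let `V` and `W` be the spans of the values of `f` and `g` in `A = E ⊗ E`. They are invariant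
under every algebra endomorphism of `A`, and `V * W` is central and nonzero. Two features of `A`
drive the argument: the grade involutions `σ₁ = involute ⊗ id` and `σ₂ = id ⊗ involute` fix the
centre pointwise, and for nonzero `x`, `y` the product `x * shift N y` is nonzero once the shift
moves `y` onto generators that do not occur in `x`. Splitting into `σ₁`-eigenparts, a product of
eigenparts of opposite signs is central and `σ₁`-odd, hence zero, and the shift then pushes `V`
and `W` into one `σ₁`-eigenspace; the flip of the two tensor factors puts them into the same
`σ₂`-eigenspace. They cannot be `σ₁`-odd: conjugation by the unit `1 + θ₀ ⊗ 1` would force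
`(θ₀ ⊗ 1) * V = 0`. Hence they are `σ₁`- and `σ₂`-even, so they commute with every generator
`θ ⊗ 1` and `1 ⊗ θ`, i.e. they are central.
-/

open Module Submodule

theorem Finset.eq_and_eq_of_union_eq_union {α : Type*} [DecidableEq α] {S T : Set α}
    (hST : Disjoint S T) {P P' Q Q' : Finset α} (hP : ↑P ⊆ S) (hP' : ↑P' ⊆ S) (hQ : ↑Q ⊆ T)
    (hQ' : ↑Q' ⊆ T) (h : P ∪ Q = P' ∪ Q') : P = P' ∧ Q = Q' := by
  have key {P Q : Finset α} (hP : ↑P ⊆ S) (hQ : ↑Q ⊆ T) :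
      ↑(P ∪ Q) ∩ S = (P : Set α) ∧ ↑(P ∪ Q) ∩ T = (Q : Set α) := by
    rw [Finset.coe_union, Set.union_inter_distrib_right, Set.union_inter_distrib_right,
      Set.inter_eq_left.mpr hP, Set.inter_eq_left.mpr hQ,
      Set.disjoint_iff_inter_eq_empty.mp (hST.symm.mono_left hQ),
      Set.disjoint_iff_inter_eq_empty.mp (hST.mono_left hP), Set.union_empty, Set.empty_union]
    exact ⟨rfl, rfl⟩
  refine ⟨Finset.coe_inj.mp ?_, Finset.coe_inj.mp ?_⟩
  · rw [← (key hP hQ).1, ← (key hP' hQ').1, h]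
  · rw [← (key hP hQ).2, ← (key hP' hQ').2, h]

namespace ExteriorAlgebra

variable {R M N I J : Type*} [CommRing R] [AddCommGroup M] [Module R M] [AddCommGroup N]
  [Module R N] [LinearOrder I] [LinearOrder J]

theorem basis_eq_prod_sort (b : Basis I R M) (S : Finset I) :
    b.ExteriorAlgebra S = (S.sort.map fun i => ι R (b i)).prod := by
  rw [basis_apply_ofCard b rfl, ιMulti_family, ιMulti_apply, List.ofFn_eq_map,
    ← Finset.listMap_orderEmbOfFin_finRange S rfl, List.map_map]
  rfl

theorem exists_basis_mul_basis_eq_smul (b : Basis I R M) {S T : Finset I} (h : Disjoint S T) :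
    ∃ ε : ℤˣ, b.ExteriorAlgebra S * b.ExteriorAlgebra T = ε • b.ExteriorAlgebra (S ∪ T) := by
  have := basis_mul_of_disjoint b (Set.powersetCard.ofCard (n := S.card) rfl)
    (Set.powersetCard.ofCard (n := T.card) rfl) h
  change _ = _ • b.ExteriorAlgebra (S.disjUnion T h) at this
  exact ⟨_, by rwa [Finset.disjUnion_eq_union] at this⟩

theorem map_basis (b : Basis I R M) (c : Basis J R N) (f : I ↪o J) (g : M →ₗ[R] N)
    (hg : ∀ i, g (b i) = c (f i)) (S : Finset I) :
    map g (b.ExteriorAlgebra S) = c.ExteriorAlgebra (S.map f.toEmbedding) := by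
  rw [basis_eq_prod_sort, basis_eq_prod_sort, map_list_prod, List.map_map,
    ← Finset.map_sort (r := (· ≤ ·)) (r' := (· ≤ ·)) _ _ fun _ _ _ _ => f.le_iff_le.symm,
    List.map_map]
  congr 1
  exact List.map_congr_left fun i _ => by simp [hg]

theorem ι_mul_eq_involute_mul (v : M) (x : ExteriorAlgebra R M) :
    ι R v * x = CliffordAlgebra.involute x * ι R v := by
  induction x using ExteriorAlgebra.induction with
  | algebraMap r => simpa using (Algebra.commute_algebraMap_right r (ι R v)).eq
  | ι w => rw [CliffordAlgebra.involute_ι, neg_mul, eq_neg_iff_add_eq_zero, ι_add_mul_swap]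
  | mul a b ha hb => rw [← mul_assoc, ha, mul_assoc, hb, map_mul, mul_assoc]
  | add a b ha hb => rw [mul_add, ha, hb, map_add, add_mul]

theorem involute_comp_map (g : M →ₗ[R] N) :
    CliffordAlgebra.involute.comp (map g) = (map g).comp CliffordAlgebra.involute := by
  ext v
  simp [CliffordAlgebra.involute_ι]

theorem commute_of_forall_commute_ι {B : Type*} [Ring B] [Algebra R B]
    (ψ : ExteriorAlgebra R M →ₐ[R] B) {x : B} (h : ∀ v, Commute (ψ (ι R v)) x)
    (a : ExteriorAlgebra R M) : Commute (ψ a) x := by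
  induction a using ExteriorAlgebra.induction with
  | algebraMap r => simpa using Algebra.commute_algebraMap_left r x
  | ι v => exact h v
  | mul a b ha hb => simpa using ha.mul_left hb
  | add a b ha hb => simpa using ha.add_left hb

end ExteriorAlgebra

section TSpace

variable {K A : Type*} [CommSemiring K] [Semiring A] [Algebra K A]

def Submodule.IsTSpace (V : Submodule K A) : Prop :=
  ∀ φ : A →ₐ[K] A, ∀ x ∈ V, φ x ∈ V

theorem Submodule.isTSpace_span {s : Set A} (hs : ∀ φ : A →ₐ[K] A, ∀ x ∈ s, φ x ∈ s) :
    (span K s).IsTSpace := fun φ _ hx =>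
  (span_le (p := (span K s).comap (φ : A →ₗ[K] A))).mpr (fun y hy => subset_span (hs φ y hy)) hx

theorem mul_mem_center_of_mem_span {s t : Set A} (hst : ∀ x ∈ s, ∀ y ∈ t, x * y ∈ Set.center A)
    {x y : A} (hx : x ∈ span K s) (hy : y ∈ span K t) : x * y ∈ Set.center A := by
  have : span K s * span K t ≤ (Subalgebra.center K A).toSubmodule := by
    rw [span_mul_span, span_le]
    rintro _ ⟨x, hx, y, hy, rfl⟩
    exact hst x hx y hy
  exact this (mul_mem_mul hx hy)

end TSpace

theorem Module.Basis.mul_ne_zero_of_mem_span {K A κ : Type*} [CommRing K] [NoZeroDivisors K]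
    [Ring A] [Algebra K A] (b : Basis κ K A) {s t : Set κ} (join : κ → κ → κ)
    (hjoin : ∀ p ∈ s, ∀ q ∈ t, ∀ p' ∈ s, ∀ q' ∈ t, join p q = join p' q' → p = p' ∧ q = q')
    (hmul : ∀ p ∈ s, ∀ q ∈ t, ∃ c : K, c ≠ 0 ∧ b p * b q = c • b (join p q))
    {x y : A} (hx : x ∈ span K (b '' s)) (hy : y ∈ span K (b '' t)) (hx0 : x ≠ 0)
    (hy0 : y ≠ 0) : x * y ≠ 0 := by
  classical
  rw [b.mem_span_image] at hx hy
  choose! c hc hbc using hmul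
  obtain ⟨p₀, hp₀⟩ := (b.repr x).support_nonempty_iff.mpr (by simpa using hx0)
  obtain ⟨q₀, hq₀⟩ := (b.repr y).support_nonempty_iff.mpr (by simpa using hy0)
  have hxy : x * y = ∑ p ∈ (b.repr x).support, ∑ q ∈ (b.repr y).support,
      (b.repr x p * b.repr y q * c p q) • b (join p q) := by
    conv_lhs => rw [← b.linearCombination_repr x, ← b.linearCombination_repr y]
    simp only [Finsupp.linearCombination_apply, Finsupp.sum, Finset.sum_mul_sum,
      smul_mul_smul_comm]
    refine Finset.sum_congr rfl fun p hp => Finset.sum_congr rfl fun q hq => ?_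
    rw [hbc p (hx hp) q (hy hq), smul_smul]
  -- by injectivity of `join`, the coefficient of `b (join p₀ q₀)` in `x * y` is a single term
  intro h
  have := congrArg (fun z => b.repr z (join p₀ q₀)) (hxy.symm.trans h)
  simp only [map_sum, map_smul, Finsupp.coe_finsetSum, Finset.sum_apply, Finsupp.smul_apply,
    b.repr_self_apply, smul_eq_mul, mul_ite, mul_one, mul_zero, map_zero,
    Finsupp.coe_zero, Pi.zero_apply] at this
  rw [Finset.sum_eq_single_of_mem p₀ hp₀, Finset.sum_eq_single_of_mem q₀ hq₀, if_pos rfl] at this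
  · exact mul_ne_zero (mul_ne_zero (by simpa using hp₀) (by simpa using hq₀))
      (hc p₀ (hx hp₀) q₀ (hy hq₀)) this
  · exact fun q hq hqq => if_neg fun h => hqq (hjoin _ (hx hp₀) _ (hy hq) _ (hx hp₀) _ (hy hq₀) h).2
  · exact fun p hp hpp => Finset.sum_eq_zero fun q hq =>
      if_neg fun h => hpp (hjoin _ (hx hp) _ (hy hq) _ (hx hp₀) _ (hy hq₀) h).1

theorem eq_zero_of_eq_neg (K : Type*) {M : Type*} [Field K] [NeZero (2 : K)] [AddCommGroup M]
    [Module K M] {x : M} (h : x = -x) : x = 0 := by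
  have : (2 : K) • x = 0 := by rw [two_smul]; nth_rewrite 1 [h]; exact neg_add_cancel x
  exact (smul_eq_zero.mp this).resolve_left two_ne_zero

section Involution

variable {K A : Type*} [Field K] [Ring A] [Algebra K A] (σ : A →ₐ[K] A)

/-- Twice the projection of `x` onto the `s`-eigenspace of the involution `σ`, for `s = ±1`. -/
def eigenPart (s : K) (x : A) : A := x + s • σ x

variable {σ}

theorem Submodule.IsTSpace.eigenPart_mem {V : Submodule K A} (hV : V.IsTSpace) (s : K) {x : A}
    (hx : x ∈ V) : eigenPart σ s x ∈ V :=
  V.add_mem hx (V.smul_mem s (hV σ x hx))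

theorem apply_eigenPart (hσ : Function.Involutive σ) {s : K} (hs : s * s = 1) (x : A) :
    σ (eigenPart σ s x) = s • eigenPart σ s x := by
  simp only [eigenPart, map_add, map_smul, hσ x, smul_add, smul_smul, hs, one_smul, add_comm]

theorem apply_eq_smul_of_eigenPart_neg_eq_zero {s : K} (hs : s * s = 1) {x : A}
    (hx : eigenPart σ (-s) x = 0) : σ x = s • x := by
  rw [eigenPart, add_eq_zero_iff_eq_neg, neg_smul, neg_neg] at hx
  conv_rhs => rw [hx, smul_smul, hs, one_smul]

theorem exists_eigenPart_mul_eigenPart_ne_zero [NeZero (2 : K)] {x y : A} (hxy : x * y ≠ 0) :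
    ∃ s : K, s * s = 1 ∧ ∃ t : K, t * t = 1 ∧ eigenPart σ s x * eigenPart σ t y ≠ 0 := by
  have hsum (z : A) : eigenPart σ 1 z + eigenPart σ (-1) z = (2 : K) • z := by
    simp only [eigenPart, one_smul, neg_one_smul, two_smul]; abel
  have h1 : (-1 : K) * -1 = 1 := by rw [neg_mul_neg, one_mul]
  by_contra! h
  have h4 : ((2 : K) * 2) • (x * y) = 0 := by
    rw [← smul_mul_smul_comm, ← hsum, ← hsum, add_mul, mul_add, mul_add, h 1 (one_mul 1) 1
      (one_mul 1), h 1 (one_mul 1) (-1) h1, h (-1) h1 1 (one_mul 1), h (-1) h1 (-1) h1]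
    simp
  exact hxy ((smul_eq_zero.mp h4).resolve_left (mul_ne_zero two_ne_zero two_ne_zero))

theorem eq_zero_or_eq_zero_of_apply_eq_smul (hcenter : ∀ z ∈ Set.center A, σ z = z)
    (hsep : ∀ x y : A, x ≠ 0 → y ≠ 0 → ∃ φ : A →ₐ[K] A, (∀ z, σ (φ z) = φ (σ z)) ∧ x * φ y ≠ 0)
    {V W : Submodule K A} (hW : W.IsTSpace) (hVW : ∀ x ∈ V, ∀ y ∈ W, x * y ∈ Set.center A)
    {x y : A} (hx : x ∈ V) (hy : y ∈ W) {s t : K} (hst : s * t ≠ 1) (hσx : σ x = s • x)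
    (hσy : σ y = t • y) : x = 0 ∨ y = 0 := by
  by_contra! h
  obtain ⟨φ, hφσ, hφ⟩ := hsep x y h.1 h.2
  have hz := hcenter _ (hVW x hx _ (hW φ y hy))
  rw [map_mul, hσx, hφσ, hσy, map_smul, smul_mul_smul_comm] at hz
  have : (s * t - 1) • (x * φ y) = 0 := by rw [sub_smul, hz, one_smul, sub_self]
  exact hφ ((smul_eq_zero.mp this).resolve_left (sub_ne_zero.mpr hst))

/-- A nonzero product in `V * W` provides nonzero eigenparts of a common sign `s` in `V` and `W`,
which by `eq_zero_or_eq_zero_of_apply_eq_smul` kill all eigenparts of sign `-s` on the other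
side. -/
theorem exists_forall_apply_eq_smul_of_mul_mem_center [NeZero (2 : K)]
    (hσ : Function.Involutive σ) (hcenter : ∀ z ∈ Set.center A, σ z = z)
    (hsep : ∀ x y : A, x ≠ 0 → y ≠ 0 → ∃ φ : A →ₐ[K] A, (∀ z, σ (φ z) = φ (σ z)) ∧ x * φ y ≠ 0)
    {V W : Submodule K A} (hV : V.IsTSpace) (hW : W.IsTSpace)
    (hVW : ∀ x ∈ V, ∀ y ∈ W, x * y ∈ Set.center A) (hne : ∃ x ∈ V, ∃ y ∈ W, x * y ≠ 0) :
    ∃ s : K, s * s = 1 ∧ (∀ x ∈ V, σ x = s • x) ∧ ∀ y ∈ W, σ y = s • y := by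
  have key {x y : A} (hx : x ∈ V) (hy : y ∈ W) {s t : K} : s * t ≠ 1 → σ x = s • x →
      σ y = t • y → x = 0 ∨ y = 0 :=
    eq_zero_or_eq_zero_of_apply_eq_smul hcenter hsep hW hVW hx hy
  have neg_sq {s : K} (hs : s * s = 1) : -s * -s = 1 := by rwa [neg_mul_neg]
  have mul_neg_ne {s : K} (hs : s * s = 1) : s * -s ≠ 1 := fun h =>
    two_ne_zero (α := K) (by linear_combination -h - hs)
  obtain ⟨x₀, hx₀, y₀, hy₀, hxy⟩ := hne
  obtain ⟨s, hs, t, ht, hst⟩ := exists_eigenPart_mul_eigenPart_ne_zero (σ := σ) hxy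
  obtain rfl : s = t := by
    by_contra hne
    refine (key (hV.eigenPart_mem s hx₀) (hW.eigenPart_mem t hy₀) (fun h => hne ?_)
      (apply_eigenPart hσ hs x₀) (apply_eigenPart hσ ht y₀)).elim
      (left_ne_zero_of_mul hst) (right_ne_zero_of_mul hst)
    linear_combination t * hs - s * h
  refine ⟨s, hs, fun x hx => apply_eq_smul_of_eigenPart_neg_eq_zero hs ?_,
    fun y hy => apply_eq_smul_of_eigenPart_neg_eq_zero hs ?_⟩
  · refine (key (hV.eigenPart_mem (-s) hx) (hW.eigenPart_mem s hy₀) ?_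
      (apply_eigenPart hσ (neg_sq hs) x) (apply_eigenPart hσ hs y₀)).resolve_right
      (right_ne_zero_of_mul hst)
    rw [mul_comm]
    exact mul_neg_ne hs
  · exact (key (hV.eigenPart_mem s hx₀) (hW.eigenPart_mem (-s) hy) (mul_neg_ne hs)
      (apply_eigenPart hσ hs x₀) (apply_eigenPart hσ (neg_sq hs) y)).resolve_left
      (left_ne_zero_of_mul hst)

/-- Conjugation by the unit `1 + a` sends a `σ`-odd `x` to `x + 2 a x`, and `a x` is `σ`-even. -/
theorem Submodule.IsTSpace.mul_eq_zero [NeZero (2 : K)] {V : Submodule K A} (hV : V.IsTSpace)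
    {a : A} (ha : a * a = 0) (hσa : σ a = -a) (haσ : ∀ x, a * x = σ x * a)
    (hσV : ∀ x ∈ V, σ x = -x) {x : A} (hx : x ∈ V) : a * x = 0 := by
  let u : Aˣ := ⟨1 + a, 1 - a, by simp [mul_sub, add_mul, ha], by simp [sub_mul, mul_add, ha]⟩
  set φ := MulSemiringAction.toAlgHom K A (ConjAct.toConjAct u)
  have hxa : x * a = -(a * x) := by rw [haσ, hσV x hx, neg_mul, neg_neg]
  have hφ : φ x = x + (2 : K) • (a * x) := by
    rw [MulSemiringAction.toAlgHom_apply, ConjAct.units_smul_def, ConjAct.ofConjAct_toConjAct]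
    change (1 + a) * x * (1 - a) = _
    rw [mul_sub, mul_one, add_mul, one_mul, add_mul, mul_assoc a x a, hxa, mul_neg, ← mul_assoc,
      ha, zero_mul, neg_zero, add_zero, sub_neg_eq_add, two_smul, add_assoc]
  have hmem : (2 : K) • (a * x) ∈ V := by
    have := V.sub_mem (hV φ x hx) hx
    rwa [hφ, add_sub_cancel_left] at this
  have h2 : (2 : K) • (a * x) = 0 := eq_zero_of_eq_neg K <| by
    rw [← hσV _ hmem, map_smul, map_mul, hσa, hσV x hx, neg_mul_neg]
  exact (smul_eq_zero.mp h2).resolve_left two_ne_zero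

end Involution

abbrev Grassmann (F : Type*) [Field F] : Type _ := ExteriorAlgebra F (ℕ →₀ F)

abbrev GrassmannSq (F : Type*) [Field F] : Type _ := Grassmann F ⊗[F] Grassmann F

namespace Grassmann

variable {F : Type*} [Field F]

noncomputable def basis : Basis (Finset ℕ) F (Grassmann F) :=
  Finsupp.basisSingleOne.ExteriorAlgebra

noncomputable def shift (N : ℕ) : Grassmann F →ₐ[F] Grassmann F :=
  ExteriorAlgebra.map (Finsupp.lmapDomain F F (· + N))

theorem shift_basis (N : ℕ) (S : Finset ℕ) :
    shift N (basis S : Grassmann F) = basis (S.map (OrderEmbedding.addRight N).toEmbedding) :=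
  ExteriorAlgebra.map_basis _ _ _ _ (fun i => by simp [Finsupp.mapDomain_single]) S

theorem shift_injective (N : ℕ) : Function.Injective (shift N : Grassmann F → Grassmann F) :=
  ExteriorAlgebra.map_injective_field
    (LinearMap.ker_eq_bot.mpr (Finsupp.mapDomain_injective (add_left_injective N)))

end Grassmann

namespace GrassmannSq

open ExteriorAlgebra (ι)

variable {F : Type*} [Field F]

noncomputable def basis : Basis (Finset ℕ × Finset ℕ) F (GrassmannSq F) :=
  Grassmann.basis.tensorProduct Grassmann.basis

theorem basis_apply (p : Finset ℕ × Finset ℕ) :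
    (basis p : GrassmannSq F) = Grassmann.basis p.1 ⊗ₜ Grassmann.basis p.2 :=
  Basis.tensorProduct_apply _ _ _ _

theorem basis_singleton_empty (k : ℕ) :
    (basis ({k}, ∅) : GrassmannSq F) = ι F (Finsupp.single k 1) ⊗ₜ 1 := by
  simp [basis_apply, Grassmann.basis, ExteriorAlgebra.basis_eq_prod_sort]

theorem exists_basis_mul_basis_eq_smul {p q : Finset ℕ × Finset ℕ} (h₁ : Disjoint p.1 q.1)
    (h₂ : Disjoint p.2 q.2) :
    ∃ c : F, c ≠ 0 ∧ (basis p * basis q : GrassmannSq F) = c • basis (p.1 ∪ q.1, p.2 ∪ q.2) := by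
  obtain ⟨ε₁, hε₁⟩ := ExteriorAlgebra.exists_basis_mul_basis_eq_smul (M := ℕ →₀ F)
    Finsupp.basisSingleOne h₁
  obtain ⟨ε₂, hε₂⟩ := ExteriorAlgebra.exists_basis_mul_basis_eq_smul (M := ℕ →₀ F)
    Finsupp.basisSingleOne h₂
  refine ⟨(((ε₁ * ε₂ : ℤˣ) : ℤ) : F), ((ε₁ * ε₂).isUnit.map (Int.castRingHom F)).ne_zero, ?_⟩
  rw [basis_apply, basis_apply, basis_apply, Algebra.TensorProduct.tmul_mul_tmul]
  simp only [Grassmann.basis, hε₁, hε₂, Units.smul_def, Units.val_mul, Int.cast_mul,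
    ← Int.cast_smul_eq_zsmul F, TensorProduct.smul_tmul', TensorProduct.tmul_smul, smul_smul]
  ring_nf

noncomputable def supported (S : Set ℕ) : Submodule F (GrassmannSq F) :=
  span F (basis '' {p | ↑p.1 ⊆ S ∧ ↑p.2 ⊆ S})

theorem basis_mem_supported {S : Set ℕ} {p : Finset ℕ × Finset ℕ} (h₁ : ↑p.1 ⊆ S)
    (h₂ : ↑p.2 ⊆ S) : basis p ∈ supported (F := F) S :=
  subset_span ⟨p, ⟨h₁, h₂⟩, rfl⟩

theorem mul_ne_zero_of_mem_supported {S T : Set ℕ} (hST : Disjoint S T) {x y : GrassmannSq F}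
    (hx : x ∈ supported S) (hy : y ∈ supported T) (hx0 : x ≠ 0) (hy0 : y ≠ 0) : x * y ≠ 0 := by
  have key := basis.mul_ne_zero_of_mem_span (K := F) (A := GrassmannSq F) (x := x) (y := y)
    (s := {p | ↑p.1 ⊆ S ∧ ↑p.2 ⊆ S}) (t := {p | ↑p.1 ⊆ T ∧ ↑p.2 ⊆ T})
    (fun p q => (p.1 ∪ q.1, p.2 ∪ q.2))
    (fun p hp q hq p' hp' q' hq' h => by
      obtain ⟨h₁, h₁'⟩ := Finset.eq_and_eq_of_union_eq_union hST hp.1 hp'.1 hq.1 hq'.1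
        (congrArg Prod.fst h)
      obtain ⟨h₂, h₂'⟩ := Finset.eq_and_eq_of_union_eq_union hST hp.2 hp'.2 hq.2 hq'.2
        (congrArg Prod.snd h)
      exact ⟨Prod.ext h₁ h₂, Prod.ext h₁' h₂'⟩)
    (fun p hp q hq => exists_basis_mul_basis_eq_smul
      (Finset.disjoint_coe.mp (hST.mono hp.1 hq.1)) (Finset.disjoint_coe.mp (hST.mono hp.2 hq.2)))
  exact key hx hy hx0 hy0

theorem exists_mem_supported_Iio (x : GrassmannSq F) : ∃ N, x ∈ supported (Set.Iio N) := by
  obtain ⟨N, hN⟩ := ((basis.repr x).support.biUnion fun p => p.1 ∪ p.2).exists_nat_subset_range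
  refine ⟨N, basis.mem_span_image.mpr fun p hp => ⟨fun i hi => ?_, fun i hi => ?_⟩⟩
  · simpa using hN (Finset.mem_biUnion.mpr ⟨p, hp, Finset.mem_union_left _ hi⟩)
  · simpa using hN (Finset.mem_biUnion.mpr ⟨p, hp, Finset.mem_union_right _ hi⟩)

noncomputable def involuteLeft : GrassmannSq F →ₐ[F] GrassmannSq F :=
  Algebra.TensorProduct.map CliffordAlgebra.involute (AlgHom.id F _)

noncomputable def involuteRight : GrassmannSq F →ₐ[F] GrassmannSq F :=
  Algebra.TensorProduct.map (AlgHom.id F _) CliffordAlgebra.involute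

theorem involuteLeft_involutive : Function.Involutive (involuteLeft : GrassmannSq F → _) :=
  fun x => by
    rw [involuteLeft, ← AlgHom.comp_apply, ← Algebra.TensorProduct.map_comp,
      CliffordAlgebra.involute_comp_involute, AlgHom.comp_id, Algebra.TensorProduct.map_id,
      AlgHom.id_apply]

theorem comm_involuteRight (x : GrassmannSq F) :
    Algebra.TensorProduct.comm F _ _ (involuteRight x) =
      involuteLeft (Algebra.TensorProduct.comm F _ _ x) :=
  AlgHom.congr_fun (Algebra.TensorProduct.comm_comp_map _ _) x

theorem ι_tmul_one_mul (v : ℕ →₀ F) (x : GrassmannSq F) :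
    (ι F v ⊗ₜ 1) * x = involuteLeft x * (ι F v ⊗ₜ 1) := by
  induction x using TensorProduct.induction_on with
  | zero => simp
  | tmul a b => simp [involuteLeft, ExteriorAlgebra.ι_mul_eq_involute_mul]
  | add x y hx hy => rw [mul_add, hx, hy, map_add, add_mul]

theorem one_tmul_ι_mul (v : ℕ →₀ F) (x : GrassmannSq F) :
    (1 ⊗ₜ ι F v) * x = involuteRight x * (1 ⊗ₜ ι F v) := by
  induction x using TensorProduct.induction_on with
  | zero => simp
  | tmul a b => simp [involuteRight, ExteriorAlgebra.ι_mul_eq_involute_mul]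
  | add x y hx hy => rw [mul_add, hx, hy, map_add, add_mul]

theorem mem_center_of_involute_eq_self {x : GrassmannSq F} (h₁ : involuteLeft x = x)
    (h₂ : involuteRight x = x) : x ∈ Set.center (GrassmannSq F) := by
  have hl := ExteriorAlgebra.commute_of_forall_commute_ι Algebra.TensorProduct.includeLeft
    (x := x) fun v => by simpa [Commute, SemiconjBy, h₁] using ι_tmul_one_mul v x
  have hr := ExteriorAlgebra.commute_of_forall_commute_ι Algebra.TensorProduct.includeRight
    (x := x) fun v => by simpa [Commute, SemiconjBy, h₂] using one_tmul_ι_mul v x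
  refine Semigroup.mem_center_iff.mpr fun t => ?_
  induction t using TensorProduct.induction_on with
  | zero => simp
  | tmul a b => simpa using ((hl a).mul_left (hr b)).eq
  | add s t hs ht => rw [add_mul, mul_add, hs, ht]

noncomputable def shift (N : ℕ) : GrassmannSq F →ₐ[F] GrassmannSq F :=
  Algebra.TensorProduct.map (Grassmann.shift N) (Grassmann.shift N)

theorem shift_basis (N : ℕ) (p : Finset ℕ × Finset ℕ) :
    shift N (basis p : GrassmannSq F) = basis (p.1.map (OrderEmbedding.addRight N).toEmbedding,
      p.2.map (OrderEmbedding.addRight N).toEmbedding) := by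
  simp only [shift, basis_apply, Algebra.TensorProduct.map_tmul, Grassmann.shift_basis]

theorem shift_mem_supported_Ici (N : ℕ) (x : GrassmannSq F) :
    shift N x ∈ supported (Set.Ici N) := by
  have hle : span F (Set.range (basis (F := F))) ≤
      (supported (Set.Ici N)).comap (shift (F := F) N).toLinearMap := by
    refine span_le.mpr ?_
    rintro _ ⟨p, rfl⟩
    show shift N (basis p : GrassmannSq F) ∈ supported (Set.Ici N)
    rw [shift_basis]
    exact basis_mem_supported (by simp [Set.subset_def]) (by simp [Set.subset_def])
  exact hle (by rw [(basis (F := F)).span_eq]; exact mem_top)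

theorem shift_injective (N : ℕ) : Function.Injective (shift N : GrassmannSq F → _) :=
  TensorProduct.map_injective_of_flat_flat _ _ (Grassmann.shift_injective N)
    (Grassmann.shift_injective N)

theorem involuteLeft_shift (N : ℕ) (x : GrassmannSq F) :
    involuteLeft (shift N x) = shift N (involuteLeft x) := by
  simp only [involuteLeft, shift, ← AlgHom.comp_apply, ← Algebra.TensorProduct.map_comp,
    Grassmann.shift, ExteriorAlgebra.involute_comp_map, AlgHom.comp_id, AlgHom.id_comp]

theorem involuteLeft_apply_of_mem_center {z : GrassmannSq F} (hz : z ∈ Set.center _) :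
    involuteLeft z = z := by
  obtain ⟨N, hN⟩ := exists_mem_supported_Iio (z - involuteLeft z)
  have hmul : (z - involuteLeft z) * basis ({N}, ∅) = 0 := by
    rw [basis_singleton_empty, sub_mul, ← ι_tmul_one_mul, Semigroup.mem_center_iff.mp hz,
      sub_self]
  by_contra h
  exact mul_ne_zero_of_mem_supported (Set.Iio_disjoint_Ici le_rfl) hN
    (basis_mem_supported (by simp) (by simp)) (sub_ne_zero.mpr (Ne.symm h)) (basis.ne_zero _) hmul

theorem exists_mul_shift_ne_zero {x y : GrassmannSq F} (hx : x ≠ 0) (hy : y ≠ 0) :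
    ∃ N, x * shift N y ≠ 0 := by
  obtain ⟨N, hN⟩ := exists_mem_supported_Iio x
  exact ⟨N, mul_ne_zero_of_mem_supported (Set.Iio_disjoint_Ici le_rfl) hN
    (shift_mem_supported_Ici N y) hx ((map_ne_zero_iff _ (shift_injective N)).mpr hy)⟩

theorem involuteRight_eq_self_of_isTSpace {U : Submodule F (GrassmannSq F)} (hU : U.IsTSpace)
    (h : ∀ x ∈ U, involuteLeft x = x) {x : GrassmannSq F} (hx : x ∈ U) : involuteRight x = x := by
  apply (Algebra.TensorProduct.comm F _ _).injective
  rw [comm_involuteRight]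
  exact h _ (hU (Algebra.TensorProduct.comm F _ _).toAlgHom x hx)

/-- `θ₀ ⊗ 1` annihilates `U` by the conjugation argument, but not `shift 1 x`, which only
involves the generators `θₖ` with `k ≥ 1`. -/
theorem eq_zero_of_isTSpace_of_involuteLeft_eq_neg [NeZero (2 : F)]
    {U : Submodule F (GrassmannSq F)} (hU : U.IsTSpace)
    (h : ∀ x ∈ U, involuteLeft x = -x) {x : GrassmannSq F} (hx : x ∈ U) : x = 0 := by
  have hmul := hU.mul_eq_zero (a := basis ({0}, ∅))
    (by rw [basis_singleton_empty, Algebra.TensorProduct.tmul_mul_tmul,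
      ExteriorAlgebra.ι_sq_zero, TensorProduct.zero_tmul])
    (by simp [basis_singleton_empty, involuteLeft, CliffordAlgebra.involute_ι,
      TensorProduct.neg_tmul])
    (by rw [basis_singleton_empty]; exact ι_tmul_one_mul _) h (hU (shift 1) x hx)
  by_contra hx0
  exact mul_ne_zero_of_mem_supported (Set.Iio_disjoint_Ici le_rfl)
    (basis_mem_supported (S := Set.Iio 1) (by simp) (by simp)) (shift_mem_supported_Ici 1 x)
    (basis.ne_zero _) ((map_ne_zero_iff _ (shift_injective 1)).mpr hx0) hmul

theorem mem_center_of_mul_mem_center [NeZero (2 : F)] {V W : Submodule F (GrassmannSq F)}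
    (hV : V.IsTSpace) (hW : W.IsTSpace) (hVW : ∀ x ∈ V, ∀ y ∈ W, x * y ∈ Set.center _)
    (hne : ∃ x ∈ V, ∃ y ∈ W, x * y ≠ 0) :
    (∀ x ∈ V, x ∈ Set.center _) ∧ ∀ y ∈ W, y ∈ Set.center _ := by
  obtain ⟨s, hs, hσV, hσW⟩ := exists_forall_apply_eq_smul_of_mul_mem_center
    involuteLeft_involutive (fun z => involuteLeft_apply_of_mem_center)
    (fun x y hx hy => by
      obtain ⟨N, hN⟩ := exists_mul_shift_ne_zero hx hy
      exact ⟨shift N, involuteLeft_shift N, hN⟩) hV hW hVW hne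
  rcases mul_self_eq_one_iff.mp hs with rfl | rfl
  · simp only [one_smul] at hσV hσW
    exact ⟨fun x hx => mem_center_of_involute_eq_self (hσV x hx)
        (involuteRight_eq_self_of_isTSpace hV hσV hx),
      fun y hy => mem_center_of_involute_eq_self (hσW y hy)
        (involuteRight_eq_self_of_isTSpace hW hσW hy)⟩
  · simp only [neg_one_smul] at hσV
    obtain ⟨x, hx, y, -, hxy⟩ := hne
    exact absurd (by rw [eq_zero_of_isTSpace_of_involuteLeft_eq_neg hV hσV hx, zero_mul]) hxy

end GrassmannSq

section PolynomialEvaluation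

variable {F A B : Type*} [CommSemiring F] [Semiring A] [Algebra F A] [Semiring B] [Algebra F B]

theorem map_polyEval (φ : A →ₐ[F] B) {n : ℕ} (f : FreeAlgebra F (Fin n)) (v : Fin n → A) :
    φ (polyEval f v) = polyEval f (φ ∘ v) := by
  rw [polyEval, polyEval, ← AlgHom.comp_apply]
  congr 1
  ext i
  simp

theorem polyEval_disjProd {r s : ℕ} (f : FreeAlgebra F (Fin r)) (g : FreeAlgebra F (Fin s))
    (v : Fin (r + s) → A) :
    polyEval (disjProd f g) v =
      polyEval f (v ∘ Fin.castAdd s) * polyEval g (v ∘ Fin.natAdd r) := by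
  change FreeAlgebra.lift F v (polyEval f _ * polyEval g _) = _
  rw [map_mul, map_polyEval, map_polyEval]
  simp [Function.comp_def]

theorem isTSpace_span_range_polyEval {n : ℕ} (f : FreeAlgebra F (Fin n)) :
    (span F (Set.range (polyEval (A := A) f))).IsTSpace :=
  isTSpace_span fun φ _ ⟨v, hv⟩ => ⟨φ ∘ v, by rw [← hv, map_polyEval]⟩

end PolynomialEvaluation

/-- The tensor square of the infinite-dimensional Grassmann algebra over a field
of characteristic zero has the primeness property on central polynomials. -/
theorem grassmann_tensor_grassmann_hasPrimeness (F : Type*) [Field F] [CharZero F] :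
    HasPrimeness F (ExteriorAlgebra F (ℕ →₀ F) ⊗[F] ExteriorAlgebra F (ℕ →₀ F)) := by
  refine ⟨⟨0, 1, fun v => by simp [polyEval, Set.one_mem_center],
    fun h => by simpa [polyEval] using h 0⟩, ?_⟩
  rintro r s f g ⟨hcent, hnid⟩
  obtain ⟨v, hv⟩ : ∃ v : Fin (r + s) → GrassmannSq F, polyEval (disjProd f g) v ≠ 0 := by
    simpa [IsIdPoly] using hnid
  rw [polyEval_disjProd] at hv
  set V := span F (Set.range (polyEval (A := GrassmannSq F) f))
  set W := span F (Set.range (polyEval (A := GrassmannSq F) g))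
  have hVW : ∀ x ∈ V, ∀ y ∈ W, x * y ∈ Set.center _ := by
    refine fun x hx y hy => mul_mem_center_of_mem_span ?_ hx hy
    rintro _ ⟨u, rfl⟩ _ ⟨w, rfl⟩
    simpa [polyEval_disjProd, Function.comp_def] using hcent (Fin.append u w)
  obtain ⟨hf, hg⟩ := GrassmannSq.mem_center_of_mul_mem_center (isTSpace_span_range_polyEval f)
    (isTSpace_span_range_polyEval g) hVW ⟨_, subset_span ⟨_, rfl⟩, _, subset_span ⟨_, rfl⟩, hv⟩
  exact ⟨⟨fun u => hf _ (subset_span ⟨u, rfl⟩), fun h => hv (by rw [h, zero_mul])⟩,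
    ⟨fun w => hg _ (subset_span ⟨w, rfl⟩), fun h => hv (by rw [h, mul_zero])⟩⟩
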